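/- Assume k₁₀(t,r) ≠ 0 for all (t,r) ∈ Ω and let 𝒟 := {(t,r,ṫ,ṙ,w) ∈ Ω × ℝ² × (0,∞) : ṫ − a(t,r)ṙ > 0}. Let L : 𝒟 → ℝ be smooth and positively 2-homogeneous in the velocities, i.e. L(t,r,λṫ,λṙ,λw) = λ²L(t,r,ṫ,ṙ,w) for all λ > 0. Then L satisfies δ_wL = 0 on 𝒟 if and only if every point of 𝒟 has an open neighborhood on which L(t,r,ṫ,ṙ,w) = u²·Ξ(t,r,z) for some smooth function Ξ of the three variables (t,r,z), where u = ṫ − aṙ and z = (cṙ² + 2bṫṙ − w²)/u². -/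

import Mathlib

noncomputable section
open Real Set

/-- The base space `(t,r)`. -/
abbrev P2 := ℝ × ℝ
/-- The space of tuples `(t,r,ṫ,ṙ,w)`. -/
abbrev P5 := ℝ × ℝ × ℝ × ℝ × ℝ

/-- `∂f/∂t` -/
def pT (f : P5 → ℝ) (p : P5) : ℝ := fderiv ℝ f p (1, 0, 0, 0, 0)
/-- `∂f/∂r` -/
def pR (f : P5 → ℝ) (p : P5) : ℝ := fderiv ℝ f p (0, 1, 0, 0, 0)
/-- `∂f/∂ṫ` -/
def pTd (f : P5 → ℝ) (p : P5) : ℝ := fderiv ℝ f p (0, 0, 1, 0, 0)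
/-- `∂f/∂ṙ` -/
def pRd (f : P5 → ℝ) (p : P5) : ℝ := fderiv ℝ f p (0, 0, 0, 1, 0)
/-- `∂f/∂w` -/
def pW (f : P5 → ℝ) (p : P5) : ℝ := fderiv ℝ f p (0, 0, 0, 0, 1)

/-- `∂k/∂t` for functions of `(t,r)` only. -/
def dt2 (k : P2 → ℝ) (q : P2) : ℝ := fderiv ℝ k q (1, 0)
/-- `∂k/∂r` for functions of `(t,r)` only. -/
def dr2 (k : P2 → ℝ) (q : P2) : ℝ := fderiv ℝ k q (0, 1)

/-- base point `(t,r)` of `p = (t,r,ṫ,ṙ,w)` -/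
def bp (p : P5) : P2 := (p.1, p.2.1)
/-- the velocity `ṫ` -/
def vT (p : P5) : ℝ := p.2.2.1
/-- the velocity `ṙ` -/
def vR (p : P5) : ℝ := p.2.2.2.1
/-- the velocity `w` -/
def vW (p : P5) : ℝ := p.2.2.2.2

/-- the horizontal derivative `δ_t f` -/
def delT (k : ℕ → P2 → ℝ) (f : P5 → ℝ) (p : P5) : ℝ :=
  pT f p - (k 1 (bp p) * vT p + k 2 (bp p) * vR p) * pTd f p
    - (k 4 (bp p) * vT p + k 6 (bp p) * vR p) * pRd f p
    - k 8 (bp p) * vW p * pW f p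

/-- the horizontal derivative `δ_r f` -/
def delR (k : ℕ → P2 → ℝ) (f : P5 → ℝ) (p : P5) : ℝ :=
  pR f p - (k 2 (bp p) * vT p + k 3 (bp p) * vR p) * pTd f p
    - (k 6 (bp p) * vT p + k 5 (bp p) * vR p) * pRd f p
    - k 9 (bp p) * vW p * pW f p

/-- the operator `δ_w f` -/
def delW (k : ℕ → P2 → ℝ) (f : P5 → ℝ) (p : P5) : ℝ :=
  vW p * k 7 (bp p) * pTd f p + vW p * k 10 (bp p) * pRd f p
    + (k 8 (bp p) * vT p + k 9 (bp p) * vR p) * pW f p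

/-- curvature coefficient `a₁` -/
def a1 (k : ℕ → P2 → ℝ) (q : P2) : ℝ :=
  dr2 (k 1) q - dt2 (k 2) q + k 3 q * k 4 q - k 2 q * k 6 q
/-- curvature coefficient `a₂` -/
def a2 (k : ℕ → P2 → ℝ) (q : P2) : ℝ :=
  dr2 (k 2) q - dt2 (k 3) q + (k 2 q)^2 + k 3 q * k 6 q - k 1 q * k 3 q - k 2 q * k 5 q
/-- curvature coefficient `a₃` -/
def a3 (k : ℕ → P2 → ℝ) (q : P2) : ℝ :=
  dr2 (k 4) q - dt2 (k 6) q + k 1 q * k 6 q + k 4 q * k 5 q - k 2 q * k 4 q - (k 6 q)^2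
/-- curvature coefficient `a₄` -/
def a4 (k : ℕ → P2 → ℝ) (q : P2) : ℝ :=
  dr2 (k 6) q - dt2 (k 5) q + k 2 q * k 6 q - k 3 q * k 4 q
/-- curvature coefficient `a₅` -/
def a5 (k : ℕ → P2 → ℝ) (q : P2) : ℝ := dr2 (k 8) q - dt2 (k 9) q
/-- curvature coefficient `a₆` -/
def a6 (k : ℕ → P2 → ℝ) (q : P2) : ℝ :=
  -dt2 (k 7) q + k 7 q * k 8 q - k 1 q * k 7 q - k 2 q * k 10 q
/-- curvature coefficient `a₇` -/
def a7 (k : ℕ → P2 → ℝ) (q : P2) : ℝ :=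
  -dt2 (k 10) q + k 8 q * k 10 q - k 4 q * k 7 q - k 6 q * k 10 q
/-- curvature coefficient `a₈` -/
def a8 (k : ℕ → P2 → ℝ) (q : P2) : ℝ :=
  -dt2 (k 8) q + k 1 q * k 8 q + k 4 q * k 9 q - (k 8 q)^2
/-- curvature coefficient `a₉` -/
def a9 (k : ℕ → P2 → ℝ) (q : P2) : ℝ :=
  -dt2 (k 9) q + k 2 q * k 8 q + k 6 q * k 9 q - k 8 q * k 9 q
/-- curvature coefficient `a₁₀` -/
def a10 (k : ℕ → P2 → ℝ) (q : P2) : ℝ :=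
  -dr2 (k 7) q + k 7 q * k 9 q - k 2 q * k 7 q - k 3 q * k 10 q
/-- curvature coefficient `a₁₁` -/
def a11 (k : ℕ → P2 → ℝ) (q : P2) : ℝ :=
  -dr2 (k 10) q + k 9 q * k 10 q - k 6 q * k 7 q - k 5 q * k 10 q
/-- curvature coefficient `a₁₂` -/
def a12 (k : ℕ → P2 → ℝ) (q : P2) : ℝ :=
  -dr2 (k 8) q + k 2 q * k 8 q + k 6 q * k 9 q - k 8 q * k 9 q
/-- curvature coefficient `a₁₃` -/
def a13 (k : ℕ → P2 → ℝ) (q : P2) : ℝ :=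
  -dr2 (k 9) q + k 3 q * k 8 q + k 5 q * k 9 q - (k 9 q)^2

/-- `a = k₇/k₁₀` -/
def aa (k : ℕ → P2 → ℝ) (q : P2) : ℝ := k 7 q / k 10 q
/-- `b = k₈/k₁₀` -/
def bb (k : ℕ → P2 → ℝ) (q : P2) : ℝ := k 8 q / k 10 q
/-- `c = (k₉k₁₀ − k₇k₈)/k₁₀²` -/
def cc (k : ℕ → P2 → ℝ) (q : P2) : ℝ := (k 9 q * k 10 q - k 7 q * k 8 q) / (k 10 q)^2

/-- `u = ṫ − a·ṙ` -/
def uV (k : ℕ → P2 → ℝ) (p : P5) : ℝ := vT p - aa k (bp p) * vR p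
/-- `v = c·ṙ² + 2b·ṫ·ṙ − w²` -/
def vV (k : ℕ → P2 → ℝ) (p : P5) : ℝ :=
  cc k (bp p) * (vR p)^2 + 2 * bb k (bp p) * vT p * vR p - (vW p)^2
/-- `z = v/u²` -/
def zV (k : ℕ → P2 → ℝ) (p : P5) : ℝ := vV k p / (uV k p)^2

/-- coefficient `A` -/
def Ac (k : ℕ → P2 → ℝ) (q : P2) : ℝ :=
  bb k q * (aa k q * a1 k q + a2 k q) + (aa k q * bb k q + cc k q) * (aa k q * a3 k q + a4 k q)
    - a5 k q * (2 * aa k q * bb k q + cc k q)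
/-- coefficient `B` -/
def Bc (k : ℕ → P2 → ℝ) (q : P2) : ℝ :=
  aa k q * (aa k q * a3 k q + a4 k q) - (aa k q * a1 k q + a2 k q)
/-- coefficient `C` -/
def Cc (k : ℕ → P2 → ℝ) (q : P2) : ℝ :=
  (aa k q * bb k q + cc k q) * a3 k q + bb k q * (aa k q * a3 k q + a4 k q)
    + bb k q * (a1 k q - 2 * a5 k q)
/-- coefficient `D` -/
def Dc (k : ℕ → P2 → ℝ) (q : P2) : ℝ := aa k q * a3 k q - a1 k q + a5 k q
/-- coefficient `E` -/
def Ec (k : ℕ → P2 → ℝ) (q : P2) : ℝ := bb k q * a3 k q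
/-- coefficient `F` -/
def Fc (k : ℕ → P2 → ℝ) (q : P2) : ℝ := aa k q * a3 k q - a1 k q

/-- `M = 2(k₁ − k₄a)` -/
def Mc (k : ℕ → P2 → ℝ) (q : P2) : ℝ := 2 * (k 1 q - k 4 q * aa k q)
/-- `M̃ = M − 2k₈` -/
def Mtc (k : ℕ → P2 → ℝ) (q : P2) : ℝ := Mc k q - 2 * k 8 q
/-- `N = 2(k₂ − k₆a)` -/
def Nc (k : ℕ → P2 → ℝ) (q : P2) : ℝ := 2 * (k 2 q - k 6 q * aa k q)
/-- `Ñ = N − 2k₉` -/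
def Ntc (k : ℕ → P2 → ℝ) (q : P2) : ℝ := Nc k q - 2 * k 9 q

/-- iterated bracket coefficient `A₁` -/
def A1 (k : ℕ → P2 → ℝ) (q : P2) : ℝ := dt2 (a1 k) q + a3 k q * k 2 q - a2 k q * k 4 q
/-- iterated bracket coefficient `A₂` -/
def A2 (k : ℕ → P2 → ℝ) (q : P2) : ℝ :=
  dt2 (a2 k) q + a2 k q * k 1 q - a1 k q * k 2 q + a4 k q * k 2 q - a2 k q * k 6 q
/-- iterated bracket coefficient `A₃` -/
def A3 (k : ℕ → P2 → ℝ) (q : P2) : ℝ :=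
  dt2 (a3 k) q - a3 k q * k 1 q + a1 k q * k 4 q - a4 k q * k 4 q + a3 k q * k 6 q
/-- iterated bracket coefficient `A₄` -/
def A4 (k : ℕ → P2 → ℝ) (q : P2) : ℝ := dt2 (a4 k) q + a2 k q * k 4 q - a3 k q * k 2 q
/-- iterated bracket coefficient `A₅` -/
def A5 (k : ℕ → P2 → ℝ) (q : P2) : ℝ := dt2 (a5 k) q
/-- iterated bracket coefficient `B₁` -/
def B1 (k : ℕ → P2 → ℝ) (q : P2) : ℝ := dr2 (a1 k) q + a3 k q * k 3 q - a2 k q * k 6 q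
/-- iterated bracket coefficient `B₂` -/
def B2 (k : ℕ → P2 → ℝ) (q : P2) : ℝ :=
  dr2 (a2 k) q + a2 k q * k 2 q - a1 k q * k 3 q + a4 k q * k 3 q - a2 k q * k 5 q
/-- iterated bracket coefficient `B₃` -/
def B3 (k : ℕ → P2 → ℝ) (q : P2) : ℝ :=
  dr2 (a3 k) q - a3 k q * k 2 q + a1 k q * k 6 q - a4 k q * k 6 q + a3 k q * k 5 q
/-- iterated bracket coefficient `B₄` -/
def B4 (k : ℕ → P2 → ℝ) (q : P2) : ℝ := dr2 (a4 k) q + a2 k q * k 6 q - a3 k q * k 3 q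
/-- iterated bracket coefficient `B₅` -/
def B5 (k : ℕ → P2 → ℝ) (q : P2) : ℝ := dr2 (a5 k) q

/-- the domain `Ω × ℝ² × (0,∞)` -/
def D5 (Ω : Set P2) : Set P5 := {p | bp p ∈ Ω ∧ 0 < vW p}

/-- the set `S(t,r,z₀)` of velocities -/
def Sset (k : ℕ → P2 → ℝ) (q : P2) (z0 : ℝ) : Set (ℝ × ℝ) :=
  {v | v.1 - aa k q * v.2 > 0 ∧
    cc k q * v.2^2 + 2 * bb k q * v.1 * v.2 - z0 * (v.1 - aa k q * v.2)^2 > 0}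

/-- `∂Ξ/∂t` for functions of `(t,r,z)` -/
def dT3 (f : ℝ × ℝ × ℝ → ℝ) (s : ℝ × ℝ × ℝ) : ℝ := fderiv ℝ f s (1, 0, 0)
/-- `∂Ξ/∂r` for functions of `(t,r,z)` -/
def dR3 (f : ℝ × ℝ × ℝ → ℝ) (s : ℝ × ℝ × ℝ) : ℝ := fderiv ℝ f s (0, 1, 0)
/-- `∂Ξ/∂z` for functions of `(t,r,z)` -/
def dZ3 (f : ℝ × ℝ × ℝ → ℝ) (s : ℝ × ℝ × ℝ) : ℝ := fderiv ℝ f s (0, 0, 1)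

/-- the domain `Ω × I ⊆ ℝ³` -/
def OI (Ω : Set P2) (I : Set ℝ) : Set (ℝ × ℝ × ℝ) := {s | (s.1, s.2.1) ∈ Ω ∧ s.2.2 ∈ I}


private lemma const_of_deriv0 {f : ℝ → ℝ} {s : Set ℝ} (hs : Convex ℝ s)
    (hf : ∀ x ∈ s, HasDerivAt f 0 x) {x y : ℝ} (hx : x ∈ s) (hy : y ∈ s) :
    f x = f y := by
  wlog hxy : x ≤ y generalizing x y
  · exact (this hy hx (le_of_not_ge hxy)).symm
  have hsub : Icc x y ⊆ s := hs.ordConnected.out hx hy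
  have := constant_of_has_deriv_right_zero (f := f) (a := x) (b := y)
    (fun z hz => (hf z (hsub hz)).continuousAt.continuousWithinAt)
    (fun z hz => ((hf z (hsub ⟨hz.1, hz.2.le⟩)).hasDerivWithinAt).mono
      (fun w hw => hw))
  exact (this y (right_mem_Icc.2 hxy)).symm

private lemma dist4_lt {a b : ℝ × ℝ × ℝ × ℝ} {ε : ℝ} (h : dist a b < ε) :
    dist a.1 b.1 < ε ∧ dist a.2.1 b.2.1 < ε ∧ dist a.2.2.1 b.2.2.1 < ε ∧
      dist a.2.2.2 b.2.2.2 < ε := by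
  simp only [Prod.dist_eq, max_lt_iff] at h
  exact ⟨h.1, h.2.1, h.2.2.1, h.2.2.2⟩

private lemma dist4_lt' {a b : ℝ × ℝ × ℝ × ℝ} {ε : ℝ} (h1 : dist a.1 b.1 < ε)
    (h2 : dist a.2.1 b.2.1 < ε) (h3 : dist a.2.2.1 b.2.2.1 < ε)
    (h4 : dist a.2.2.2 b.2.2.2 < ε) : dist a b < ε := by
  simp only [Prod.dist_eq, max_lt_iff]
  exact ⟨h1, h2, h3, h4⟩

/-- When `k₁₀ ≠ 0`, a 2-homogeneous Lagrangian satisfies `δ_w L = 0` iff it is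
locally of the form `L = u²·Ξ(t,r,z)` with `Ξ` smooth in the three variables `(t,r,z)`. -/
theorem stmt7 (Ω : Set P2) (hΩopen : IsOpen Ω) (hΩne : Ω.Nonempty)
    (k : ℕ → P2 → ℝ) (hk : ∀ i, ContDiffOn ℝ (⊤ : ℕ∞) (k i) Ω)
    (hk10 : ∀ q ∈ Ω, k 10 q ≠ 0)
    (L : P5 → ℝ)
    (hL : ContDiffOn ℝ (⊤ : ℕ∞) L {p : P5 | bp p ∈ Ω ∧ 0 < vW p ∧ 0 < uV k p})
    (hhom : ∀ p ∈ {p : P5 | bp p ∈ Ω ∧ 0 < vW p ∧ 0 < uV k p}, ∀ l : ℝ, 0 < l →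
      L (p.1, p.2.1, l * vT p, l * vR p, l * vW p) = l^2 * L p) :
    (∀ p ∈ {p : P5 | bp p ∈ Ω ∧ 0 < vW p ∧ 0 < uV k p}, delW k L p = 0) ↔
      (∀ p ∈ {p : P5 | bp p ∈ Ω ∧ 0 < vW p ∧ 0 < uV k p},
        ∃ V : Set P5, IsOpen V ∧ p ∈ V ∧ V ⊆ {p : P5 | bp p ∈ Ω ∧ 0 < vW p ∧ 0 < uV k p} ∧
          ∃ W : Set (ℝ × ℝ × ℝ), IsOpen W ∧
            ∃ Ξ : ℝ × ℝ × ℝ → ℝ, ContDiffOn ℝ (⊤ : ℕ∞) Ξ W ∧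
              ∀ q ∈ V, (q.1, q.2.1, zV k q) ∈ W ∧
                L q = (uV k q)^2 * Ξ (q.1, q.2.1, zV k q)) := by
  set S : Set P5 := {p : P5 | bp p ∈ Ω ∧ 0 < vW p ∧ 0 < uV k p} with hSdef
  have hbpc : Continuous bp := by unfold bp; fun_prop
  have hvWc : Continuous vW := by unfold vW; fun_prop
  have hvTc : Continuous vT := by unfold vT; fun_prop
  have hvRc : Continuous vR := by unfold vR; fun_prop
  have hcda : ContDiffOn ℝ (⊤ : ℕ∞) (aa k) Ω := by
    unfold aa; exact (hk 7).div (hk 10) hk10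
  have hcdb : ContDiffOn ℝ (⊤ : ℕ∞) (bb k) Ω := by
    unfold bb; exact (hk 8).div (hk 10) hk10
  have hcdc : ContDiffOn ℝ (⊤ : ℕ∞) (cc k) Ω := by
    unfold cc
    exact (((hk 9).mul (hk 10)).sub ((hk 7).mul (hk 8))).div ((hk 10).pow 2)
      (fun q hq => pow_ne_zero 2 (hk10 q hq))
  have hbpm : ∀ x : P5, x ∈ bp ⁻¹' Ω → bp x ∈ Ω := fun x hx => hx
  have huc : ContinuousOn (uV k) (bp ⁻¹' Ω) := by
    unfold uV
    exact hvTc.continuousOn.sub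
      ((hcda.continuousOn.comp hbpc.continuousOn hbpm).mul hvRc.continuousOn)
  have hvVc : ContinuousOn (vV k) (bp ⁻¹' Ω) := by
    unfold vV
    exact (((hcdc.continuousOn.comp hbpc.continuousOn hbpm).mul
        (hvRc.continuousOn.pow 2)).add
      ((((continuousOn_const.mul (hcdb.continuousOn.comp hbpc.continuousOn hbpm)).mul
        hvTc.continuousOn)).mul hvRc.continuousOn)).sub (hvWc.continuousOn.pow 2)
  have hSsub : S ⊆ bp ⁻¹' Ω := fun q hq => hq.1
  have hSopen : IsOpen S := by
    have h1 : S = {p : P5 | bp p ∈ Ω ∧ 0 < vW p} ∩ (uV k) ⁻¹' (Set.Ioi 0) := by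
      ext q
      simp only [hSdef, Set.mem_setOf_eq, Set.mem_inter_iff, Set.mem_preimage,
        Set.mem_Ioi, and_assoc]
    have hTopen : IsOpen {p : P5 | bp p ∈ Ω ∧ 0 < vW p} := by
      have h2 : {p : P5 | bp p ∈ Ω ∧ 0 < vW p} = bp ⁻¹' Ω ∩ vW ⁻¹' (Set.Ioi 0) := rfl
      rw [h2]
      exact (hΩopen.preimage hbpc).inter (isOpen_Ioi.preimage hvWc)
    rw [h1]
    exact ContinuousOn.isOpen_inter_preimage (huc.mono (fun x hx => hx.1)) hTopen isOpen_Ioi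
  have hzc : ContinuousOn (zV k) S := by
    unfold zV
    exact (hvVc.mono hSsub).div ((huc.mono hSsub).pow 2)
      (fun q hq => pow_ne_zero 2 (ne_of_gt hq.2.2))
  have hdiffL : ∀ x ∈ S, DifferentiableAt ℝ L x := fun x hx =>
    (hL.contDiffAt (hSopen.mem_nhds hx)).differentiableAt (by simp)
  have hkey : ∀ x ∈ S, delW k L x =
      fderiv ℝ L x (0, 0, vW x * k 7 (bp x), vW x * k 10 (bp x),
        k 8 (bp x) * vT x + k 9 (bp x) * vR x) := by
    intro x hx
    have h3 : ((0:ℝ), (0:ℝ), vW x * k 7 (bp x), vW x * k 10 (bp x),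
        k 8 (bp x) * vT x + k 9 (bp x) * vR x)
        = (vW x * k 7 (bp x)) • ((0:ℝ), (0:ℝ), (1:ℝ), (0:ℝ), (0:ℝ))
          + (vW x * k 10 (bp x)) • ((0:ℝ), (0:ℝ), (0:ℝ), (1:ℝ), (0:ℝ))
          + (k 8 (bp x) * vT x + k 9 (bp x) * vR x) •
              ((0:ℝ), (0:ℝ), (0:ℝ), (0:ℝ), (1:ℝ)) := by
      simp [Prod.ext_iff]
    rw [h3, map_add, map_add, map_smul, map_smul, map_smul]
    simp only [delW, pTd, pRd, pW, smul_eq_mul]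
  constructor
  · -- forward direction
    intro h p hp
    obtain ⟨t0, r0, T0, R0, W0⟩ := p
    have hp' : (t0, r0) ∈ Ω ∧ 0 < W0 ∧ 0 < T0 - aa k (t0, r0) * R0 := hp
    obtain ⟨hpΩ, hpw, hpu⟩ := hp'
    have h10 : k 10 (t0, r0) ≠ 0 := hk10 _ hpΩ
    have hu0ne : T0 - aa k (t0, r0) * R0 ≠ 0 := ne_of_gt hpu
    set ρ0 : ℝ := R0 / (T0 - aa k (t0, r0) * R0) with hρ0
    set z0 : ℝ := (cc k (t0, r0) * R0 ^ 2 + 2 * bb k (t0, r0) * T0 * R0 - W0 ^ 2) /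
      (T0 - aa k (t0, r0) * R0) ^ 2 with hz0
    have hz0' : zV k (t0, r0, T0, R0, W0) = z0 := rfl
    set Hf : ℝ × ℝ × ℝ × ℝ → ℝ := fun x =>
      cc k (x.1, x.2.1) * x.2.2.2 ^ 2
        + 2 * bb k (x.1, x.2.1) * (1 + aa k (x.1, x.2.1) * x.2.2.2) * x.2.2.2
        - x.2.2.1 with hHf
    set x0 : ℝ × ℝ × ℝ × ℝ := (t0, r0, z0, ρ0) with hx0
    have hHx0 : Hf x0 = (W0 / (T0 - aa k (t0, r0) * R0)) ^ 2 := by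
      rw [hHf, hx0]
      simp only [hρ0, hz0]
      rw [eq_comm, ← sub_eq_zero]
      field_simp
      ring
    -- the open set O
    have hπ4 : Continuous (fun x : ℝ × ℝ × ℝ × ℝ => (x.1, x.2.1)) := by fun_prop
    have hU4open : IsOpen {x : ℝ × ℝ × ℝ × ℝ | (x.1, x.2.1) ∈ Ω} :=
      hΩopen.preimage hπ4
    have hU4m : ∀ x : ℝ × ℝ × ℝ × ℝ, x ∈ {x : ℝ × ℝ × ℝ × ℝ | (x.1, x.2.1) ∈ Ω} →
        (x.1, x.2.1) ∈ Ω := fun x hx => hx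
    have hHcont : ContinuousOn Hf {x : ℝ × ℝ × ℝ × ℝ | (x.1, x.2.1) ∈ Ω} := by
      rw [hHf]
      exact (((hcdc.continuousOn.comp hπ4.continuousOn hU4m).mul
          ((continuous_snd.comp (continuous_snd.comp continuous_snd)).continuousOn.pow 2)).add
        (((continuousOn_const.mul
            (hcdb.continuousOn.comp hπ4.continuousOn hU4m)).mul
          (continuousOn_const.add
            ((hcda.continuousOn.comp hπ4.continuousOn hU4m).mul
              (continuous_snd.comp (continuous_snd.comp continuous_snd)).continuousOn))).mul
          (continuous_snd.comp (continuous_snd.comp continuous_snd)).continuousOn)).sub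
        (continuous_fst.comp (continuous_snd.comp continuous_snd)).continuousOn
    set O : Set (ℝ × ℝ × ℝ × ℝ) :=
      {x : ℝ × ℝ × ℝ × ℝ | (x.1, x.2.1) ∈ Ω} ∩ Hf ⁻¹' (Set.Ioi 0) with hO
    have hOopen : IsOpen O :=
      ContinuousOn.isOpen_inter_preimage hHcont hU4open isOpen_Ioi
    have hx0O : x0 ∈ O := by
      refine ⟨hpΩ, ?_⟩
      rw [Set.mem_preimage, hHx0]
      exact pow_pos (div_pos hpw hpu) 2
    obtain ⟨ε, hε, hball⟩ := Metric.isOpen_iff.1 hOopen x0 hx0O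
    -- the neighborhood V
    set Φ : P5 → ℝ × ℝ × ℝ × ℝ := fun q => (q.1, q.2.1, zV k q, vR q / uV k q) with hΦ
    have hΦc : ContinuousOn Φ S := by
      rw [hΦ]
      exact continuous_fst.continuousOn.prodMk
        (((continuous_fst.comp continuous_snd).continuousOn).prodMk
          (hzc.prodMk ((hvRc.continuousOn.mono hSsub).div (huc.mono hSsub)
            (fun q hq => ne_of_gt hq.2.2))))
    set V : Set P5 := S ∩ Φ ⁻¹' (Metric.ball x0 (ε / 2)) with hV
    have hVopen : IsOpen V :=
      ContinuousOn.isOpen_inter_preimage hΦc hSopen Metric.isOpen_ball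
    have hΦp : Φ (t0, r0, T0, R0, W0) = x0 := rfl
    have hpV : (t0, r0, T0, R0, W0) ∈ V := by
      refine ⟨hp, ?_⟩
      rw [Set.mem_preimage, hΦp]
      exact Metric.mem_ball_self (by positivity)
    -- the open set W and the function Ξ
    set W : Set (ℝ × ℝ × ℝ) := (fun s : ℝ × ℝ × ℝ => (s.1, s.2.1, s.2.2, ρ0)) ⁻¹' O
      with hW
    have hWopen : IsOpen W := hOopen.preimage (by fun_prop)
    set Ξ : ℝ × ℝ × ℝ → ℝ := fun s =>
      L (s.1, s.2.1, 1 + aa k (s.1, s.2.1) * ρ0, ρ0,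
        Real.sqrt (Hf (s.1, s.2.1, s.2.2, ρ0))) with hΞ
    have hπ3 : ContDiff ℝ (⊤ : ℕ∞) (fun s : ℝ × ℝ × ℝ => (s.1, s.2.1)) := by fun_prop
    have hWsub : ∀ s ∈ W, (s.1, s.2.1) ∈ Ω := fun s hs => hs.1
    have hHW : ContDiffOn ℝ (⊤ : ℕ∞) (fun s : ℝ × ℝ × ℝ => Hf (s.1, s.2.1, s.2.2, ρ0)) W := by
      rw [hHf]
      show ContDiffOn ℝ (⊤ : ℕ∞) (fun s : ℝ × ℝ × ℝ =>
        cc k (s.1, s.2.1) * ρ0 ^ 2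
          + 2 * bb k (s.1, s.2.1) * (1 + aa k (s.1, s.2.1) * ρ0) * ρ0 - s.2.2) W
      exact (((hcdc.comp hπ3.contDiffOn hWsub).mul contDiffOn_const).add
        (((contDiffOn_const.mul (hcdb.comp hπ3.contDiffOn hWsub)).mul
          (contDiffOn_const.add
            ((hcda.comp hπ3.contDiffOn hWsub).mul contDiffOn_const))).mul
          contDiffOn_const)).sub
        ((contDiff_snd.comp contDiff_snd : ContDiff ℝ (⊤ : ℕ∞) (fun s : ℝ × ℝ × ℝ => s.2.2)).contDiffOn)
    have hsq : ContDiffOn ℝ (⊤ : ℕ∞)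
        (fun s : ℝ × ℝ × ℝ => Real.sqrt (Hf (s.1, s.2.1, s.2.2, ρ0))) W := by
      intro s hs
      have hpos : (0 : ℝ) < Hf (s.1, s.2.1, s.2.2, ρ0) := hs.2
      exact ((Real.contDiffAt_sqrt (ne_of_gt hpos)).comp s
        (hHW.contDiffAt (hWopen.mem_nhds hs))).contDiffWithinAt
    have hjc : ContDiffOn ℝ (⊤ : ℕ∞) (fun s : ℝ × ℝ × ℝ =>
        ((s.1 : ℝ), (s.2.1 : ℝ), 1 + aa k (s.1, s.2.1) * ρ0, (ρ0 : ℝ),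
          Real.sqrt (Hf (s.1, s.2.1, s.2.2, ρ0)))) W := by
      refine contDiff_fst.contDiffOn.prodMk ?_
      refine (contDiff_fst.comp contDiff_snd).contDiffOn.prodMk ?_
      refine (contDiffOn_const.add
        ((hcda.comp hπ3.contDiffOn hWsub).mul contDiffOn_const)).prodMk ?_
      exact contDiffOn_const.prodMk hsq
    have hjS : ∀ s ∈ W, ((s.1 : ℝ), (s.2.1 : ℝ), 1 + aa k (s.1, s.2.1) * ρ0, (ρ0 : ℝ),
        Real.sqrt (Hf (s.1, s.2.1, s.2.2, ρ0))) ∈ S := by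
      intro s hs
      refine ⟨hs.1, Real.sqrt_pos.2 hs.2, ?_⟩
      show (0 : ℝ) < 1 + aa k (s.1, s.2.1) * ρ0 - aa k (s.1, s.2.1) * ρ0
      simp
    have hΞcd : ContDiffOn ℝ (⊤ : ℕ∞) Ξ W := by
      rw [hΞ]
      exact hL.comp hjc hjS
    refine ⟨V, hVopen, hpV, fun q hq => hq.1, W, hWopen, Ξ, hΞcd, ?_⟩
    rintro ⟨t1, r1, T1, R1, W1⟩ hqV
    obtain ⟨hqS, hqB⟩ := hqV
    have hqS' : (t1, r1) ∈ Ω ∧ 0 < W1 ∧ 0 < T1 - aa k (t1, r1) * R1 := hqS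
    obtain ⟨hqΩ, hqw, hqu⟩ := hqS'
    have h10' : k 10 (t1, r1) ≠ 0 := hk10 _ hqΩ
    have hu1ne : T1 - aa k (t1, r1) * R1 ≠ 0 := ne_of_gt hqu
    have hqB' : dist (Φ (t1, r1, T1, R1, W1)) x0 < ε / 2 := hqB
    have hd := dist4_lt hqB'
    have hdt : dist t1 t0 < ε / 2 := hd.1
    have hdr : dist r1 r0 < ε / 2 := hd.2.1
    have hdz : dist (zV k (t1, r1, T1, R1, W1)) z0 < ε / 2 := hd.2.2.1
    have hdρ : dist (R1 / (T1 - aa k (t1, r1) * R1)) ρ0 < ε / 2 := hd.2.2.2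
    have hhalf : ε / 2 < ε := half_lt_self hε
    -- membership of (t1, r1, z1) in W
    have hmemW : ((t1 : ℝ), (r1 : ℝ), zV k (t1, r1, T1, R1, W1)) ∈ W := by
      apply hball
      exact dist4_lt' (lt_trans hdt hhalf) (lt_trans hdr hhalf) (lt_trans hdz hhalf)
        (by simpa [hx0] using hε)
    refine ⟨hmemW, ?_⟩
    -- abbreviations
    set z1 : ℝ := zV k (t1, r1, T1, R1, W1) with hz1
    set g : ℝ → ℝ := fun ρ =>
      L (t1, r1, 1 + aa k (t1, r1) * ρ, ρ,
        Real.sqrt (cc k (t1, r1) * ρ ^ 2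
          + 2 * bb k (t1, r1) * (1 + aa k (t1, r1) * ρ) * ρ - z1)) with hg
    -- the derivative of g vanishes on the ball
    have hgd : ∀ ρ ∈ Metric.ball ρ0 (ε / 2), HasDerivAt g 0 ρ := by
      intro ρ hρ
      have hxO : ((t1 : ℝ), (r1 : ℝ), z1, ρ) ∈ O := by
        apply hball
        exact dist4_lt' (lt_trans hdt hhalf) (lt_trans hdr hhalf) (lt_trans hdz hhalf)
          (lt_trans (Metric.mem_ball.1 hρ) hhalf)
      have hGpos : (0 : ℝ) < cc k (t1, r1) * ρ ^ 2
          + 2 * bb k (t1, r1) * (1 + aa k (t1, r1) * ρ) * ρ - z1 := hxO.2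
      have hyS : ((t1 : ℝ), (r1 : ℝ), 1 + aa k (t1, r1) * ρ, (ρ : ℝ),
          Real.sqrt (cc k (t1, r1) * ρ ^ 2
            + 2 * bb k (t1, r1) * (1 + aa k (t1, r1) * ρ) * ρ - z1)) ∈ S := by
        refine ⟨hqΩ, Real.sqrt_pos.2 hGpos, ?_⟩
        show (0 : ℝ) < 1 + aa k (t1, r1) * ρ - aa k (t1, r1) * ρ
        simp
      -- build the curve derivative
      have hι : HasDerivAt (fun x : ℝ => x) 1 ρ := hasDerivAt_id ρ
      have h2d : HasDerivAt (fun x : ℝ => cc k (t1, r1) * x ^ 2)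
          (cc k (t1, r1) * (2 * ρ ^ 1)) ρ := (hasDerivAt_pow 2 ρ).const_mul _
      have h3d : HasDerivAt (fun x : ℝ => 2 * bb k (t1, r1) * (1 + aa k (t1, r1) * x))
          (2 * bb k (t1, r1) * (aa k (t1, r1) * 1)) ρ := by
        exact ((hι.const_mul (aa k (t1, r1))).const_add 1).const_mul _
      have h4d := h3d.mul hι
      have hGd : HasDerivAt (fun x : ℝ => cc k (t1, r1) * x ^ 2
          + 2 * bb k (t1, r1) * (1 + aa k (t1, r1) * x) * x - z1)
          (cc k (t1, r1) * (2 * ρ ^ 1)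
            + (2 * bb k (t1, r1) * (aa k (t1, r1) * 1) * ρ
              + 2 * bb k (t1, r1) * (1 + aa k (t1, r1) * ρ) * 1)) ρ :=
        (h2d.add h4d).sub_const z1
      have hsqd := hGd.sqrt (ne_of_gt hGpos)
      have hcurve : HasDerivAt (fun x : ℝ =>
          ((t1 : ℝ), (r1 : ℝ), 1 + aa k (t1, r1) * x, (x : ℝ),
            Real.sqrt (cc k (t1, r1) * x ^ 2
              + 2 * bb k (t1, r1) * (1 + aa k (t1, r1) * x) * x - z1)))
          ((0 : ℝ), (0 : ℝ), aa k (t1, r1) * 1, (1 : ℝ),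
            (cc k (t1, r1) * (2 * ρ ^ 1)
              + (2 * bb k (t1, r1) * (aa k (t1, r1) * 1) * ρ
                + 2 * bb k (t1, r1) * (1 + aa k (t1, r1) * ρ) * 1)) /
              (2 * Real.sqrt (cc k (t1, r1) * ρ ^ 2
                + 2 * bb k (t1, r1) * (1 + aa k (t1, r1) * ρ) * ρ - z1))) ρ := by
        exact (hasDerivAt_const ρ t1).prodMk ((hasDerivAt_const ρ r1).prodMk
          (((hι.const_mul (aa k (t1, r1))).const_add 1).prodMk (hι.prodMk hsqd)))
      have hLg := (hdiffL _ hyS).hasFDerivAt.comp_hasDerivAt ρ hcurve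
      -- identify the direction with a multiple of the δ_w direction
      set y : P5 := ((t1 : ℝ), (r1 : ℝ), 1 + aa k (t1, r1) * ρ, (ρ : ℝ),
          Real.sqrt (cc k (t1, r1) * ρ ^ 2
            + 2 * bb k (t1, r1) * (1 + aa k (t1, r1) * ρ) * ρ - z1)) with hy
      have hsqne : Real.sqrt (cc k (t1, r1) * ρ ^ 2
          + 2 * bb k (t1, r1) * (1 + aa k (t1, r1) * ρ) * ρ - z1) ≠ 0 :=
        ne_of_gt (Real.sqrt_pos.2 hGpos)
      have hsqsq : Real.sqrt (cc k (t1, r1) * ρ ^ 2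
          + 2 * bb k (t1, r1) * (1 + aa k (t1, r1) * ρ) * ρ - z1) ^ 2
          = cc k (t1, r1) * ρ ^ 2
            + 2 * bb k (t1, r1) * (1 + aa k (t1, r1) * ρ) * ρ - z1 :=
        Real.sq_sqrt (le_of_lt hGpos)
      have hk7' : k 7 (t1, r1) = aa k (t1, r1) * k 10 (t1, r1) := by
        unfold aa; field_simp
      have hk8' : k 8 (t1, r1) = bb k (t1, r1) * k 10 (t1, r1) := by
        unfold bb; field_simp
      have hk9' : k 9 (t1, r1) = (cc k (t1, r1) + aa k (t1, r1) * bb k (t1, r1)) *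
          k 10 (t1, r1) := by
        unfold aa bb cc; field_simp; ring
      have hXeq : (((0 : ℝ), (0 : ℝ), aa k (t1, r1) * 1, (1 : ℝ),
          (cc k (t1, r1) * (2 * ρ ^ 1)
            + (2 * bb k (t1, r1) * (aa k (t1, r1) * 1) * ρ
              + 2 * bb k (t1, r1) * (1 + aa k (t1, r1) * ρ) * 1)) /
            (2 * Real.sqrt (cc k (t1, r1) * ρ ^ 2
              + 2 * bb k (t1, r1) * (1 + aa k (t1, r1) * ρ) * ρ - z1))) : P5)
          = (1 / (Real.sqrt (cc k (t1, r1) * ρ ^ 2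
              + 2 * bb k (t1, r1) * (1 + aa k (t1, r1) * ρ) * ρ - z1) * k 10 (t1, r1))) •
            ((0 : ℝ), (0 : ℝ), vW y * k 7 (bp y), vW y * k 10 (bp y),
              k 8 (bp y) * vT y + k 9 (bp y) * vR y) := by
        rw [hy]
        simp only [vW, vT, vR, bp, Prod.smul_mk, smul_eq_mul]
        refine Prod.ext (by simp) (Prod.ext (by simp) (Prod.ext ?_ (Prod.ext ?_ ?_)))
        · show aa k (t1, r1) * 1 = _
          dsimp only
          rw [hk7', div_mul_eq_mul_div, one_mul, eq_div_iff (mul_ne_zero hsqne h10')]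
          ring
        · show (1 : ℝ) = _
          dsimp only
          rw [one_div, inv_mul_cancel₀ (mul_ne_zero hsqne h10')]
        · show _ = _
          rw [hk8', hk9']
          field_simp
          ring
      have hzero : fderiv ℝ L y (((0 : ℝ), (0 : ℝ), aa k (t1, r1) * 1, (1 : ℝ),
          (cc k (t1, r1) * (2 * ρ ^ 1)
            + (2 * bb k (t1, r1) * (aa k (t1, r1) * 1) * ρ
              + 2 * bb k (t1, r1) * (1 + aa k (t1, r1) * ρ) * 1)) /
            (2 * Real.sqrt (cc k (t1, r1) * ρ ^ 2
              + 2 * bb k (t1, r1) * (1 + aa k (t1, r1) * ρ) * ρ - z1))) : P5) = 0 := by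
        rw [hXeq, map_smul, ← hkey y hyS, h y hyS, smul_zero]
      rw [hg]
      have : HasDerivAt (fun ρ' : ℝ =>
          L (t1, r1, 1 + aa k (t1, r1) * ρ', ρ',
            Real.sqrt (cc k (t1, r1) * ρ' ^ 2
              + 2 * bb k (t1, r1) * (1 + aa k (t1, r1) * ρ') * ρ' - z1))) 0 ρ := by
        rw [← hzero]
        exact hLg
      exact this
    -- g is constant on the ball
    have hg01 : g (R1 / (T1 - aa k (t1, r1) * R1)) = g ρ0 := by
      apply const_of_deriv0 (convex_ball ρ0 (ε / 2)) hgd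
      · exact Metric.mem_ball.2 hdρ
      · exact Metric.mem_ball_self (by positivity)
    -- homogeneity step
    have hp'S : ((t1 : ℝ), (r1 : ℝ), T1 / (T1 - aa k (t1, r1) * R1),
        R1 / (T1 - aa k (t1, r1) * R1), W1 / (T1 - aa k (t1, r1) * R1)) ∈ S := by
      refine ⟨hqΩ, div_pos hqw hqu, ?_⟩
      show (0 : ℝ) < T1 / (T1 - aa k (t1, r1) * R1)
        - aa k (t1, r1) * (R1 / (T1 - aa k (t1, r1) * R1))
      have heq : T1 / (T1 - aa k (t1, r1) * R1)
          - aa k (t1, r1) * (R1 / (T1 - aa k (t1, r1) * R1)) = 1 := by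
        field_simp
      rw [heq]; exact one_pos
    have hhh := hhom _ hp'S (T1 - aa k (t1, r1) * R1) hqu
    have e1 : (T1 - aa k (t1, r1) * R1) * (T1 / (T1 - aa k (t1, r1) * R1)) = T1 := by
      field_simp
    have e2 : (T1 - aa k (t1, r1) * R1) * (R1 / (T1 - aa k (t1, r1) * R1)) = R1 := by
      field_simp
    have e3 : (T1 - aa k (t1, r1) * R1) * (W1 / (T1 - aa k (t1, r1) * R1)) = W1 := by
      field_simp
    have hhh' : L (t1, r1, T1, R1, W1) = (T1 - aa k (t1, r1) * R1) ^ 2 *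
        L (t1, r1, T1 / (T1 - aa k (t1, r1) * R1), R1 / (T1 - aa k (t1, r1) * R1),
          W1 / (T1 - aa k (t1, r1) * R1)) := by
      have hvt : vT ((t1 : ℝ), (r1 : ℝ), T1 / (T1 - aa k (t1, r1) * R1),
          R1 / (T1 - aa k (t1, r1) * R1), W1 / (T1 - aa k (t1, r1) * R1))
          = T1 / (T1 - aa k (t1, r1) * R1) := rfl
      rw [hvt] at hhh
      rw [show vR ((t1 : ℝ), (r1 : ℝ), T1 / (T1 - aa k (t1, r1) * R1),
          R1 / (T1 - aa k (t1, r1) * R1), W1 / (T1 - aa k (t1, r1) * R1))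
          = R1 / (T1 - aa k (t1, r1) * R1) from rfl] at hhh
      rw [show vW ((t1 : ℝ), (r1 : ℝ), T1 / (T1 - aa k (t1, r1) * R1),
          R1 / (T1 - aa k (t1, r1) * R1), W1 / (T1 - aa k (t1, r1) * R1))
          = W1 / (T1 - aa k (t1, r1) * R1) from rfl] at hhh
      rw [e1, e2, e3] at hhh
      exact hhh
    -- identify L at the normalized point with g ρ1
    have hTgρ : T1 / (T1 - aa k (t1, r1) * R1)
        = 1 + aa k (t1, r1) * (R1 / (T1 - aa k (t1, r1) * R1)) := by
      field_simp
      ring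
    have hWgρ : W1 / (T1 - aa k (t1, r1) * R1)
        = Real.sqrt (cc k (t1, r1) * (R1 / (T1 - aa k (t1, r1) * R1)) ^ 2
          + 2 * bb k (t1, r1) * (1 + aa k (t1, r1) * (R1 / (T1 - aa k (t1, r1) * R1)))
            * (R1 / (T1 - aa k (t1, r1) * R1)) - z1) := by
      have harg : cc k (t1, r1) * (R1 / (T1 - aa k (t1, r1) * R1)) ^ 2
          + 2 * bb k (t1, r1) * (1 + aa k (t1, r1) * (R1 / (T1 - aa k (t1, r1) * R1)))
            * (R1 / (T1 - aa k (t1, r1) * R1)) - z1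
          = (W1 / (T1 - aa k (t1, r1) * R1)) ^ 2 := by
        rw [hz1]
        simp only [zV, vV, uV, vT, vR, vW, bp]
        rw [eq_comm, ← sub_eq_zero]
        field_simp
        ring
      rw [harg, Real.sqrt_sq (le_of_lt (div_pos hqw hqu))]
    have hgoal2 : L ((t1 : ℝ), (r1 : ℝ), T1 / (T1 - aa k (t1, r1) * R1),
        R1 / (T1 - aa k (t1, r1) * R1), W1 / (T1 - aa k (t1, r1) * R1))
        = g (R1 / (T1 - aa k (t1, r1) * R1)) := by
      rw [hg]
      rw [hTgρ, hWgρ]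
    have hΞg : Ξ ((t1 : ℝ), (r1 : ℝ), z1) = g ρ0 := rfl
    have huV' : uV k ((t1 : ℝ), (r1 : ℝ), T1, R1, W1) = T1 - aa k (t1, r1) * R1 := rfl
    rw [huV', hhh', hgoal2, hg01, ← hΞg]

  · -- reverse direction
    intro h p hp
    obtain ⟨V, hVopen, hpV, hVS, W, hWopen, Ξ, hΞ, hq⟩ := h p hp
    obtain ⟨t0, r0, T0, R0, W0⟩ := p
    have hp' : (t0, r0) ∈ Ω ∧ 0 < W0 ∧ 0 < T0 - aa k (t0, r0) * R0 := hp
    obtain ⟨hpΩ, hpw, hpu⟩ := hp'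
    have h10 : k 10 (t0, r0) ≠ 0 := hk10 _ hpΩ
    set a' := aa k (t0, r0) with ha'
    set b' := bb k (t0, r0) with hb'
    set c' := cc k (t0, r0) with hc'
    set u0 : ℝ := T0 - a' * R0 with hu0
    set v0 : ℝ := c' * R0 ^ 2 + 2 * b' * T0 * R0 - W0 ^ 2 with hv0
    set A0 : ℝ := W0 * k 7 (t0, r0) with hA0
    set B0 : ℝ := W0 * k 10 (t0, r0) with hB0
    set m0 : ℝ := k 8 (t0, r0) * T0 + k 9 (t0, r0) * R0 with hm0
    set Q0 : ℝ := c' * B0 ^ 2 + 2 * b' * A0 * B0 - m0 ^ 2 with hQ0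
    set γ : ℝ → P5 := fun ε => (t0, r0, T0 + ε * A0, R0 + ε * B0, W0 + ε * m0) with hγ
    have hγ0 : γ 0 = (t0, r0, T0, R0, W0) := by simp [hγ]
    have hγcont : Continuous γ := by unfold γ; fun_prop
    -- key algebraic identities
    have hk7 : k 7 (t0, r0) = a' * k 10 (t0, r0) := by
      rw [ha']; unfold aa; field_simp
    have hk8 : k 8 (t0, r0) = b' * k 10 (t0, r0) := by
      rw [hb']; unfold bb; field_simp
    have hk9 : k 9 (t0, r0) = (c' + a' * b') * k 10 (t0, r0) := by
      rw [hc', ha', hb']; unfold aa bb cc; field_simp; ring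
    have huγ : ∀ ε : ℝ, uV k (γ ε) = u0 := by
      intro ε
      simp only [hγ, uV, vT, vR, bp, hu0]
      rw [ha']
      unfold aa
      field_simp
      ring
    have hvγ : ∀ ε : ℝ, vV k (γ ε) = v0 + ε ^ 2 * Q0 := by
      intro ε
      simp only [hγ, vV, vT, vR, vW, bp, hv0, hQ0, hA0, hB0, hm0]
      rw [← hb', ← hc', hk7, hk8, hk9]
      ring
    have hu0ne : u0 ≠ 0 := ne_of_gt hpu
    have hzγ : ∀ ε : ℝ, zV k (γ ε) = (v0 + ε ^ 2 * Q0) / u0 ^ 2 := by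
      intro ε
      unfold zV
      rw [huγ ε, hvγ ε]
    -- the curve derivative
    have hγd : HasDerivAt γ ((0 : ℝ), (0 : ℝ), A0, B0, m0) 0 := by
      have h1 : HasDerivAt (fun ε : ℝ => T0 + ε * A0) A0 0 := by
        simpa using (hasDerivAt_mul_const A0).const_add T0
      have h2 : HasDerivAt (fun ε : ℝ => R0 + ε * B0) B0 0 := by
        simpa using (hasDerivAt_mul_const B0).const_add R0
      have h3 : HasDerivAt (fun ε : ℝ => W0 + ε * m0) m0 0 := by
        simpa using (hasDerivAt_mul_const m0).const_add W0
      exact (hasDerivAt_const 0 t0).prodMk ((hasDerivAt_const 0 r0).prodMk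
        (h1.prodMk (h2.prodMk h3)))
    have hLd : HasDerivAt (fun ε => L (γ ε))
        (fderiv ℝ L (t0, r0, T0, R0, W0) ((0 : ℝ), (0 : ℝ), A0, B0, m0)) 0 := by
      have hfd : HasFDerivAt L (fderiv ℝ L (t0, r0, T0, R0, W0)) (γ 0) := by
        rw [hγ0]; exact (hdiffL _ hp).hasFDerivAt
      exact hfd.comp_hasDerivAt 0 hγd
    -- the local model
    set s0 : ℝ × ℝ × ℝ := (t0, r0, zV k (t0, r0, T0, R0, W0)) with hs0
    have hs0W : s0 ∈ W := (hq _ hpV).1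
    have hΞd : DifferentiableAt ℝ Ξ s0 :=
      (hΞ.contDiffAt (hWopen.mem_nhds hs0W)).differentiableAt (by simp)
    have hψd : HasDerivAt (fun ε : ℝ => ((t0 : ℝ), (r0 : ℝ), (v0 + ε ^ 2 * Q0) / u0 ^ 2))
        ((0 : ℝ), (0 : ℝ), (0 : ℝ)) 0 := by
      have hin : HasDerivAt (fun ε : ℝ => (v0 + ε ^ 2 * Q0) / u0 ^ 2) 0 0 := by
        have := (((hasDerivAt_pow 2 (0 : ℝ)).mul_const Q0).const_add v0).div_const (u0 ^ 2)
        simpa using this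
      exact (hasDerivAt_const 0 t0).prodMk ((hasDerivAt_const 0 r0).prodMk hin)
    have hψ0 : ((t0 : ℝ), (r0 : ℝ), (v0 + (0:ℝ) ^ 2 * Q0) / u0 ^ 2) = s0 := by
      have : zV k (t0, r0, T0, R0, W0) = v0 / u0 ^ 2 := by
        simp only [zV, uV, vV, vT, vR, vW, bp, hu0, hv0, ha', hb', hc']
      simp [hs0, this]
    have hφd : HasDerivAt (fun ε : ℝ =>
        u0 ^ 2 * Ξ (t0, r0, (v0 + ε ^ 2 * Q0) / u0 ^ 2)) 0 0 := by
      have hfd2 : HasFDerivAt Ξ (fderiv ℝ Ξ s0)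
          ((t0 : ℝ), (r0 : ℝ), (v0 + (0:ℝ) ^ 2 * Q0) / u0 ^ 2) := by
        rw [hψ0]; exact hΞd.hasFDerivAt
      have hcomp := hfd2.comp_hasDerivAt 0 hψd
      have h0 : fderiv ℝ Ξ s0 ((0 : ℝ), (0 : ℝ), (0 : ℝ)) = 0 := by
        have hz : ((0 : ℝ), (0 : ℝ), (0 : ℝ)) = (0 : ℝ × ℝ × ℝ) := rfl
        rw [hz, map_zero]
      have := hcomp.const_mul (u0 ^ 2)
      rw [h0, mul_zero] at this
      exact this
    have hev : (fun ε => L (γ ε)) =ᶠ[nhds (0 : ℝ)]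
        (fun ε : ℝ => u0 ^ 2 * Ξ (t0, r0, (v0 + ε ^ 2 * Q0) / u0 ^ 2)) := by
      have hmem : γ ⁻¹' V ∈ nhds (0 : ℝ) :=
        (hVopen.preimage hγcont).mem_nhds (by rw [Set.mem_preimage, hγ0]; exact hpV)
      filter_upwards [hmem] with ε hε
      have h1 := (hq (γ ε) hε).2
      rw [h1, huγ ε, hzγ ε]
    have hL0 : HasDerivAt (fun ε => L (γ ε)) 0 0 := hφd.congr_of_eventuallyEq hev
    have h0' : fderiv ℝ L (t0, r0, T0, R0, W0) ((0 : ℝ), (0 : ℝ), A0, B0, m0) = 0 :=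
      hLd.unique hL0
    rw [hkey _ hp]
    rw [hA0, hB0, hm0] at h0'
    exact h0'
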